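/- For every vertex v of the d-dimensional hypercube Q^d, the simple configuration that places 3^d − 1 pebbles on v and no pebbles elsewhere is not coverable. -/

import Mathlib

open Finset

/-- A pebbling step on graph `G`: remove two pebbles from a vertex `u`,
place one pebble on an adjacent vertex `v`. -/
def PebbleStep {V : Type*} (G : SimpleGraph V) (C C' : V → ℕ) : Prop :=
  ∃ u v : V, G.Adj u v ∧ 2 ≤ C u ∧ C' u = C u - 2 ∧ C' v = C v + 1 ∧
    ∀ x : V, x ≠ u → x ≠ v → C' x = C x

/-- A configuration is coverable if after some sequence of pebbling steps
every vertex has at least one pebble. -/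
def Coverable {V : Type*} (G : SimpleGraph V) (C : V → ℕ) : Prop :=
  ∃ C' : V → ℕ, Relation.ReflTransGen (PebbleStep G) C C' ∧ ∀ v : V, 1 ≤ C' v

/-- The `d`-dimensional hypercube: vertices are binary `d`-tuples, adjacent
exactly when they differ in one coordinate. -/
def cube (d : ℕ) : SimpleGraph (Fin d → Bool) where
  Adj x y := hammingDist x y = 1
  symm := ⟨fun x y (h : hammingDist x y = 1) => (hammingDist_comm y x).trans h⟩
  loopless := ⟨fun x (h : hammingDist x x = 1) => by simp [hammingDist_self] at h⟩

/-! The potential `C ↦ ∑ₓ C x · 2^{dist(x, v)}` never increases under a pebbling step,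
since a step trades two pebbles at `u` for one pebble at a neighbour, which is at most one step
further from `v`. The configuration with `3^d − 1` pebbles on `v` has potential `3^d − 1`,
whereas every covering configuration of `Q^d` has potential at least
`∑ₓ 2^{dist(x, v)} = 3^d`. -/

section Weight

variable {V : Type*} [Fintype V]

def weight (w C : V → ℕ) : ℕ :=
  ∑ x, C x * w x

def AtMostDoublesAlongEdges (G : SimpleGraph V) (w : V → ℕ) : Prop :=
  ∀ ⦃x y⦄, G.Adj x y → w y ≤ 2 * w x

variable {G : SimpleGraph V} {w : V → ℕ}

lemma weight_ite_eq [DecidableEq V] (w : V → ℕ) (v : V) (n : ℕ) :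
    weight w (fun x => if x = v then n else 0) = n * w v := by
  simp [weight, ite_mul]

lemma weight_add_of_pebbleStep [DecidableEq V] {C C' : V → ℕ} {u v : V} (huv : u ≠ v)
    (hu : 2 ≤ C u) (hu' : C' u = C u - 2) (hv' : C' v = C v + 1)
    (hother : ∀ x, x ≠ u → x ≠ v → C' x = C x) :
    weight w C' + 2 * w u = weight w C + w v := by
  have hpoint : ∀ x, C' x * w x + (if x = u then 2 * w u else 0)
      = C x * w x + (if x = v then w v else 0) := by
    intro x
    by_cases hxu : x = u
    · subst hxu
      simp only [if_neg huv, if_true, hu', add_zero, ← Nat.add_mul, Nat.sub_add_cancel hu]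
    · by_cases hxv : x = v
      · subst hxv
        simp only [if_neg hxu, if_true, hv', add_zero, add_mul, one_mul]
      · simp only [if_neg hxu, if_neg hxv, hother x hxu hxv]
  have hsum := sum_congr rfl fun x (_ : x ∈ univ) => hpoint x
  simpa only [weight, sum_add_distrib, sum_ite_eq', mem_univ, if_true] using hsum

lemma weight_le_of_pebbleStep (hw : AtMostDoublesAlongEdges G w) {C C' : V → ℕ}
    (h : PebbleStep G C C') : weight w C' ≤ weight w C := by
  classical
  obtain ⟨u, v, hadj, hu, hu', hv', hother⟩ := h
  have := weight_add_of_pebbleStep (w := w) hadj.ne hu hu' hv' hother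
  have := hw hadj
  omega

lemma weight_le_of_reflTransGen (hw : AtMostDoublesAlongEdges G w) {C C' : V → ℕ}
    (h : Relation.ReflTransGen (PebbleStep G) C C') : weight w C' ≤ weight w C := by
  induction h with
  | refl => rfl
  | tail _ step ih => exact (weight_le_of_pebbleStep hw step).trans ih

lemma Coverable.sum_le_weight (hw : AtMostDoublesAlongEdges G w) {C : V → ℕ}
    (hC : Coverable G C) : ∑ x, w x ≤ weight w C := by
  obtain ⟨C', hsteps, hcov⟩ := hC
  calc ∑ x, w x ≤ weight w C' :=
        sum_le_sum fun x _ => Nat.le_mul_of_pos_left (w x) (hcov x)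
    _ ≤ weight w C := weight_le_of_reflTransGen hw hsteps

end Weight

section Cube

variable {d : ℕ}

lemma atMostDoublesAlongEdges_cube (v : Fin d → Bool) :
    AtMostDoublesAlongEdges (cube d) fun x => 2 ^ hammingDist x v := by
  intro x y hxy
  have hdist : hammingDist y v ≤ hammingDist x v + 1 := by
    have := hammingDist_triangle y x v
    rw [hammingDist_comm y x, show hammingDist x y = 1 from hxy] at this
    omega
  calc 2 ^ hammingDist y v ≤ 2 ^ (hammingDist x v + 1) := Nat.pow_le_pow_right two_pos hdist
    _ = 2 * 2 ^ hammingDist x v := by rw [pow_succ']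

lemma sum_two_pow_hammingDist (v : Fin d → Bool) :
    ∑ x : Fin d → Bool, 2 ^ hammingDist x v = 3 ^ d := by
  have hprod : ∀ x : Fin d → Bool,
      2 ^ hammingDist x v = ∏ i, if x i = v i then 1 else 2 := by
    intro x
    rw [hammingDist, prod_ite, prod_const, prod_const, one_pow, one_mul]
  have hfactor : ∀ i, ∑ b : Bool, (if b = v i then 1 else 2) = 3 := by
    intro i
    cases v i <;> rfl
  calc ∑ x : Fin d → Bool, 2 ^ hammingDist x v
      = ∑ x : Fin d → Bool, ∏ i, if x i = v i then 1 else 2 :=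
        sum_congr rfl fun x _ => hprod x
    _ = ∏ i, ∑ b : Bool, if b = v i then 1 else 2 :=
        (Fintype.prod_sum fun i b => if b = v i then 1 else 2).symm
    _ = 3 ^ d := by simp only [hfactor, prod_const, card_univ, Fintype.card_fin]

end Cube

/-- For every vertex `v` of `Q^d`, the simple configuration placing `3^d − 1`
pebbles on `v` and none elsewhere is not coverable. -/
theorem simple_configuration_not_coverable (d : ℕ) (v : Fin d → Bool) :
    ¬ Coverable (cube d) (fun x => if x = v then 3 ^ d - 1 else 0) := by
  intro hcov
  have hle := hcov.sum_le_weight (atMostDoublesAlongEdges_cube v)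
  rw [sum_two_pow_hammingDist, weight_ite_eq, hammingDist_self, pow_zero, mul_one] at hle
  have : 0 < 3 ^ d := by positivity
  omega
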